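/- arXiv:2603.14372 — 4 statements merged into one kernel-verified Lean document; each statement's English description precedes it below -/
import Mathlib

section
/- Consider the two-player game with strategy space [0,1] for each player, qualities Q_1(x_1,x_2) = x_1 and Q_2(x_1,x_2) = 2x_2, and winner-takes-all allocation: player 1 receives W_1 = 1 if x_1 > 2x_2, W_1 = 1/2 if x_1 = 2x_2, and W_1 = 0 if x_1 < 2x_2; player 2 receives W_2 = 1 − W_1. Utilities are U_1(x_1,x_2) = W_1(x_1,x_2) − 0.5·x_1 and U_2(x_1,x_2) = W_2(x_1,x_2) − 0.5·x_2. Then this game has no pure Nash equilibrium: there is no (x_1*, x_2*) ∈ [0,1]² such that U_1(x_1*,x_2*) ≥ U_1(x_1,x_2*) for all x_1 ∈ [0,1] and U_2(x_1*,x_2*) ≥ U_2(x_1*,x_2) for all x_2 ∈ [0,1]. -/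
open Classical in
/-- Winner-takes-all share of player 1: full attention if strictly higher quality
(`Q₁ = x₁` vs `Q₂ = 2x₂`), split in half on a tie. -/
noncomputable def wtaShare1 (x₁ x₂ : ℝ) : ℝ :=
  if x₁ > 2 * x₂ then 1 else if x₁ = 2 * x₂ then 1 / 2 else 0

/-- Utility of player 1 under winner-takes-all. -/
noncomputable def wtaU1 (x₁ x₂ : ℝ) : ℝ := wtaShare1 x₁ x₂ - 0.5 * x₁

/-- Utility of player 2 under winner-takes-all. -/
noncomputable def wtaU2 (x₁ x₂ : ℝ) : ℝ := (1 - wtaShare1 x₁ x₂) - 0.5 * x₂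

/-- The two-player winner-takes-all game with qualities
`Q₁ = x₁`, `Q₂ = 2x₂` and costs `0.5·xᵢ` has no pure Nash equilibrium. -/
theorem wta_no_pure_nash_equilibrium :
    ¬ ∃ x₁ x₂ : ℝ, x₁ ∈ Set.Icc (0 : ℝ) 1 ∧ x₂ ∈ Set.Icc (0 : ℝ) 1 ∧
      (∀ y ∈ Set.Icc (0 : ℝ) 1, wtaU1 y x₂ ≤ wtaU1 x₁ x₂) ∧
      (∀ y ∈ Set.Icc (0 : ℝ) 1, wtaU2 x₁ y ≤ wtaU2 x₁ x₂) := by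
  rintro ⟨x₁, x₂, ⟨h10, h11⟩, ⟨h20, h21⟩, hN1, hN2⟩
  rcases lt_trichotomy x₁ (2 * x₂) with hlt | heq | hgt
  · -- player 2 wins
    rcases eq_or_lt_of_le h10 with h0 | hpos
    · -- x₁ = 0, so x₂ > 0; player 2 deviates to x₂/2
      have hx2 : 0 < x₂ := by linarith
      have hdev := hN2 (x₂ / 2) ⟨by linarith, by linarith⟩
      have e1 : wtaShare1 x₁ (x₂ / 2) = 0 := by
        rw [wtaShare1, if_neg (by linarith), if_neg (by linarith)]
      have e2 : wtaShare1 x₁ x₂ = 0 := by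
        rw [wtaShare1, if_neg (by linarith), if_neg (by linarith)]
      rw [wtaU2, wtaU2, e1, e2] at hdev
      linarith
    · -- x₁ > 0; player 1 deviates to 0
      have hdev := hN1 0 ⟨le_refl _, by norm_num⟩
      have e1 : wtaShare1 0 x₂ = 0 := by
        rw [wtaShare1, if_neg (by linarith), if_neg (by linarith)]
      have e2 : wtaShare1 x₁ x₂ = 0 := by
        rw [wtaShare1, if_neg (by linarith), if_neg (by linarith)]
      rw [wtaU1, wtaU1, e1, e2] at hdev
      norm_num at hdev
      linarith
  · -- tie; player 2 deviates to x₂ + 1/4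
    have hdev := hN2 (x₂ + 1/4) ⟨by linarith, by linarith⟩
    have e1 : wtaShare1 x₁ (x₂ + 1/4) = 0 := by
      rw [wtaShare1, if_neg (by linarith), if_neg (by linarith)]
    have e2 : wtaShare1 x₁ x₂ = 1 / 2 := by
      rw [wtaShare1, if_neg (by linarith), if_pos heq]
    rw [wtaU2, wtaU2, e1, e2] at hdev
    norm_num at hdev
    linarith
  · -- player 1 wins; player 2 deviates to 3/4
    have hdev := hN2 (3/4) ⟨by norm_num, by norm_num⟩
    have e1 : wtaShare1 x₁ (3/4) = 0 := by
      rw [wtaShare1, if_neg (by linarith), if_neg (by linarith)]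
    have e2 : wtaShare1 x₁ x₂ = 1 := by
      rw [wtaShare1, if_pos hgt]
    rw [wtaU2, wtaU2, e1, e2] at hdev
    norm_num at hdev
    linarith
end

section
/- Let N ≥ 1 players each have strategy space [0,1]. For each i let Q_i : [0,1]^N → ℝ be nondecreasing in every coordinate (with respect to the componentwise order), let p_i ≥ 0 be a real constant, let c_i : [0,1] → ℝ be any function, and define utilities U_i(x) = p_i·Q_i(x) − c_i(x_i). Suppose x̄ ∈ [0,1]^N is a pure Nash equilibrium and x ∈ [0,1]^N is a pure Nash equilibrium with x̄_j ≥ x_j for every j. Then U_i(x̄) ≥ U_i(x) for every player i. -/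
/-- Under a provisional allocation mechanism with nonnegative shares
and coordinatewise nondecreasing quality functions, a pure Nash equilibrium that
componentwise dominates another pure Nash equilibrium Pareto-dominates it. -/
theorem greatest_equilibrium_pareto_dominates
    (N : ℕ) (hN : 1 ≤ N)
    (Q : Fin N → (Fin N → ℝ) → ℝ)
    (hQmono : ∀ i : Fin N, ∀ x y : Fin N → ℝ,
      x ∈ Set.Icc (0 : Fin N → ℝ) 1 → y ∈ Set.Icc (0 : Fin N → ℝ) 1 →
      (∀ j, x j ≤ y j) → Q i x ≤ Q i y)
    (p : Fin N → ℝ) (hp : ∀ i, 0 ≤ p i)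
    (c : Fin N → ℝ → ℝ)
    (U : Fin N → (Fin N → ℝ) → ℝ)
    (hU : ∀ i x, U i x = p i * Q i x - c i (x i))
    (xbar x : Fin N → ℝ)
    (hxbar : xbar ∈ Set.Icc (0 : Fin N → ℝ) 1) (hx : x ∈ Set.Icc (0 : Fin N → ℝ) 1)
    (hNEbar : ∀ i : Fin N, ∀ s ∈ Set.Icc (0 : ℝ) 1,
      U i (Function.update xbar i s) ≤ U i xbar)
    (hNE : ∀ i : Fin N, ∀ s ∈ Set.Icc (0 : ℝ) 1,
      U i (Function.update x i s) ≤ U i x)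
    (hdom : ∀ j, x j ≤ xbar j) :
    ∀ i, U i x ≤ U i xbar := by
  intro i
  obtain ⟨hx0, hx1⟩ := hx
  obtain ⟨hxb0, hxb1⟩ := hxbar
  set y := Function.update xbar i (x i) with hy
  have hymem : y ∈ Set.Icc (0 : Fin N → ℝ) 1 := by
    constructor <;> intro j <;> by_cases h : j = i
    · subst h; simpa [hy] using hx0 j
    · simpa [hy, Function.update_of_ne h] using hxb0 j
    · subst h; simpa [hy] using hx1 j
    · simpa [hy, Function.update_of_ne h] using hxb1 j
  have h1 : U i y ≤ U i xbar := hNEbar i (x i) ⟨hx0 i, hx1 i⟩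
  have h2 : U i x ≤ U i y := by
    rw [hU, hU]
    have hQ : Q i x ≤ Q i y := by
      apply hQmono i x y ⟨hx0, hx1⟩ hymem
      intro j
      by_cases h : j = i
      · subst h; simp [hy]
      · simpa [hy, Function.update_of_ne h] using hdom j
    have : y i = x i := by simp [hy]
    rw [this]
    have := mul_le_mul_of_nonneg_left hQ (hp i)
    linarith
  linarith
end

section
/- Let N ≥ 2 and let M = (M_1,…,M_N) with each M_i : [0,1]^N → [0,1] twice continuously differentiable (on an open set containing [0,1]^N). Suppose that for every family Q = (Q_1,…,Q_N) of quality functions Q_k : [0,1]^N → [0,1] that are twice continuously differentiable, have all first partial derivatives nonnegative on [0,1]^N, and satisfy ∂²Q_k/(∂x_k ∂x_j)(x) ≥ 0 for all j ≠ k and all x ∈ [0,1]^N, the composite functions satisfy strategic complementarities, i.e. ∂²( M_i ∘ Q )/(∂x_i ∂x_j)(x) ≥ 0 for every i, every j ≠ i, and every x ∈ [0,1]^N, where Q(x) = (Q_1(x),…,Q_N(x)). Then M is monotone in qualities: ∂M_i/∂Q_k (the partial derivative of M_i with respect to its k-th argument) is nonnegative at every point of [0,1]^N, for all i and k. -/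
/-!
Fix a second player `j ≠ i` and a profile `q` with `q k < 1`. The quality family
`crossBump q ε i j k : x ↦ q + ε x_i x_j e_k`, with `ε = 1 - q k`, has positive spillovers and
effort complementarities, and at `x = 0` the cross partial `∂²(M_i ∘ Q)/∂x_i∂x_j` equals
`ε ∂M_i/∂Q_k (q)`: the term carrying second derivatives of `M_i` has the factor `x_i = 0`.
Strategic complementarities therefore force `∂M_i/∂Q_k (q) ≥ 0`. A profile with `q k = 1` is the
limit of `t • q` as `t → 1⁻`, and `∂M_i/∂Q_k` is continuous.
-/

open Set Filter Topology

section CrossBump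

variable {ι : Type*} [Fintype ι] [DecidableEq ι] (q : ι → ℝ) (ε : ℝ) (i j k : ι)

def crossBump (x : ι → ℝ) : ι → ℝ :=
  q + (ε * (x i * x j)) • (Pi.single k 1 : ι → ℝ)

omit [Fintype ι] in
@[simp]
lemma crossBump_apply (x : ι → ℝ) (m : ι) :
    crossBump q ε i j k x m = q m + ε * (x i * x j) * (Pi.single k 1 : ι → ℝ) m := by
  simp [crossBump]

omit [Fintype ι] in
@[simp]
lemma crossBump_zero : crossBump q ε i j k 0 = q := by
  ext m
  simp

lemma contDiff_crossBump {n : WithTop ℕ∞} : ContDiff ℝ n (crossBump q ε i j k) :=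
  contDiff_const.add <|
    (contDiff_const.mul ((contDiff_apply ℝ ℝ i).mul (contDiff_apply ℝ ℝ j))).smul contDiff_const

lemma differentiable_crossBump : Differentiable ℝ (crossBump q ε i j k) :=
  (contDiff_crossBump q ε i j k (n := 1)).differentiable one_ne_zero

lemma hasFDerivAt_crossBump (x : ι → ℝ) :
    HasFDerivAt (crossBump q ε i j k)
      (ContinuousLinearMap.smulRight
        (ε • (x i • ContinuousLinearMap.proj j + x j • ContinuousLinearMap.proj i) :
          (ι → ℝ) →L[ℝ] ℝ) (Pi.single k 1)) x :=
  ((((hasFDerivAt_apply i x).fun_mul (hasFDerivAt_apply j x)).const_mul ε).smul_const _).const_add q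

lemma fderiv_crossBump_apply (x v : ι → ℝ) :
    fderiv ℝ (crossBump q ε i j k) x v
      = (ε * (x i * v j + x j * v i)) • (Pi.single k 1 : ι → ℝ) := by
  simp [(hasFDerivAt_crossBump q ε i j k x).fderiv, mul_add]

lemma fderiv_crossBump_coord_apply (m : ι) (x v : ι → ℝ) :
    fderiv ℝ (fun y => crossBump q ε i j k y m) x v
      = ε * (x i * v j + x j * v i) * (Pi.single k 1 : ι → ℝ) m := by
  rw [(hasFDerivAt_pi'.1 (hasFDerivAt_crossBump q ε i j k x) m).fderiv]
  simp [mul_add]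

lemma fderiv_fderiv_crossBump_coord_apply (m : ι) (x v w : ι → ℝ) :
    fderiv ℝ (fun y => fderiv ℝ (fun z => crossBump q ε i j k z m) y v) x w
      = ε * (w i * v j + w j * v i) * (Pi.single k 1 : ι → ℝ) m := by
  simp_rw [fderiv_crossBump_coord_apply]
  have hi : HasFDerivAt (fun y : ι → ℝ => y i) (ContinuousLinearMap.proj (R := ℝ) i) x :=
    hasFDerivAt_apply i x
  have hj : HasFDerivAt (fun y : ι → ℝ => y j) (ContinuousLinearMap.proj (R := ℝ) j) x :=
    hasFDerivAt_apply j x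
  have h := (((hi.mul_const (v j)).fun_add (hj.mul_const (v i))).const_mul ε).mul_const
    ((Pi.single k 1 : ι → ℝ) m)
  rw [h.fderiv]
  simp only [smul_apply, add_apply,
    ContinuousLinearMap.proj_apply, smul_eq_mul]
  ring

variable {q ε}

lemma fderiv_crossBump_coord_nonneg (hε : 0 ≤ ε) (m : ι) {x v : ι → ℝ} (hx : 0 ≤ x)
    (hv : 0 ≤ v) : 0 ≤ fderiv ℝ (fun y => crossBump q ε i j k y m) x v := by
  rw [fderiv_crossBump_coord_apply]
  exact mul_nonneg
    (mul_nonneg hε (add_nonneg (mul_nonneg (hx i) (hv j)) (mul_nonneg (hx j) (hv i))))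
    ((Pi.single_nonneg.2 zero_le_one : (0 : ι → ℝ) ≤ Pi.single k 1) m)

lemma fderiv_fderiv_crossBump_coord_nonneg (hε : 0 ≤ ε) (m : ι) (x : ι → ℝ) {v w : ι → ℝ}
    (hv : 0 ≤ v) (hw : 0 ≤ w) :
    0 ≤ fderiv ℝ (fun y => fderiv ℝ (fun z => crossBump q ε i j k z m) y v) x w := by
  rw [fderiv_fderiv_crossBump_coord_apply]
  exact mul_nonneg
    (mul_nonneg hε (add_nonneg (mul_nonneg (hw i) (hv j)) (mul_nonneg (hw j) (hv i))))
    ((Pi.single_nonneg.2 zero_le_one : (0 : ι → ℝ) ≤ Pi.single k 1) m)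

omit [Fintype ι] in
lemma crossBump_mem_Icc (hq : q ∈ Icc 0 1) (hε : 0 ≤ ε) (hqε : q k + ε ≤ 1) {x : ι → ℝ}
    (hx : x ∈ Icc 0 1) : crossBump q ε i j k x ∈ Icc 0 1 := by
  have hb : 0 ≤ ε * (x i * x j) ∧ ε * (x i * x j) ≤ ε :=
    ⟨mul_nonneg hε (mul_nonneg (hx.1 i) (hx.1 j)),
      mul_le_of_le_one_right hε (mul_le_one₀ (hx.2 i) (hx.1 j) (hx.2 j))⟩
  refine ⟨fun m => ?_, fun m => ?_⟩ <;>
  · have hqm : 0 ≤ q m ∧ q m ≤ 1 := ⟨hq.1 m, hq.2 m⟩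
    obtain rfl | hm := eq_or_ne m k
    · simp only [crossBump_apply, Pi.single_eq_same, Pi.zero_apply, Pi.one_apply]
      linarith
    · simp [Pi.single_eq_of_ne hm, hqm]

lemma fderiv_fderiv_comp_crossBump {f : (ι → ℝ) → ℝ} (hf : ContDiffAt ℝ 2 f q) (hij : i ≠ j) :
    fderiv ℝ (fun y => fderiv ℝ (fun z => f (crossBump q ε i j k z)) y (Pi.single j 1)) 0
      (Pi.single i 1) = ε * fderiv ℝ f q (Pi.single k 1) := by
  have htendsto : Tendsto (crossBump q ε i j k) (𝓝 0) (𝓝 q) :=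
    (differentiable_crossBump q ε i j k).continuous.tendsto' 0 q (crossBump_zero q ε i j k)
  have hdiff : ∀ᶠ y in 𝓝 0, DifferentiableAt ℝ f (crossBump q ε i j k y) :=
    htendsto.eventually ((hf.eventually (by simp)).mono fun p hp => hp.differentiableAt (by simp))
  have hpartial : (fun y => fderiv ℝ (fun z => f (crossBump q ε i j k z)) y (Pi.single j 1))
      =ᶠ[𝓝 0] fun y => (ε * y i) * fderiv ℝ f (crossBump q ε i j k y) (Pi.single k 1) := by
    filter_upwards [hdiff] with y hy
    rw [fderiv_fun_comp y hy (differentiable_crossBump q ε i j k y),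
      ContinuousLinearMap.comp_apply, fderiv_crossBump_apply]
    simp [hij]
  have hfactor : HasFDerivAt (fun y : ι → ℝ => ε * y i)
      (ε • ContinuousLinearMap.proj (R := ℝ) i) 0 :=
    (hasFDerivAt_apply i 0).const_mul ε
  have hsecond : DifferentiableAt ℝ (fderiv ℝ f) (crossBump q ε i j k 0) := by
    rw [crossBump_zero]
    exact (hf.fderiv_right (m := 1) (by norm_num)).differentiableAt one_ne_zero
  have hpartial_k : DifferentiableAt ℝ
      (fun y => fderiv ℝ f (crossBump q ε i j k y) (Pi.single k 1)) 0 :=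
    (hsecond.comp 0 (differentiable_crossBump q ε i j k 0)).clm_apply (differentiableAt_const _)
  rw [hpartial.fderiv_eq, (hfactor.fun_mul hpartial_k.hasFDerivAt).fderiv]
  simp [mul_comm]

end CrossBump

lemma nonneg_of_continuousAt_of_forall_Ico_nonneg_smul {E : Type*} [TopologicalSpace E]
    [AddCommMonoid E] [Module ℝ E] [ContinuousSMul ℝ E] {S : E → ℝ} {q : E}
    (hS : ContinuousAt S q) (h : ∀ t ∈ Ico (0 : ℝ) 1, 0 ≤ S (t • q)) : 0 ≤ S q := by
  have hlim : Tendsto (fun t : ℝ => t • q) (𝓝[<] 1) (𝓝 q) := by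
    have hc : Continuous fun t : ℝ => t • q := by fun_prop
    simpa using (hc.tendsto 1).mono_left nhdsWithin_le_nhds
  exact ge_of_tendsto (hS.tendsto.comp hlim) (eventually_of_mem (Ico_mem_nhdsLT one_pos) h)

theorem strategic_complementarities_implies_monotone_mechanism_general
    (N : ℕ) (hN : 2 ≤ N)
    (M : Fin N → (Fin N → ℝ) → ℝ)
    (V : Set (Fin N → ℝ)) (hV : IsOpen V) (hVI : Set.Icc (0 : Fin N → ℝ) 1 ⊆ V)
    (hM2 : ∀ i, ContDiffOn ℝ 2 (M i) V)
    (hSC : ∀ Q : Fin N → (Fin N → ℝ) → ℝ,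
      (∀ k, ContDiff ℝ 2 (Q k)) →
      (∀ k, ∀ x ∈ Set.Icc (0 : Fin N → ℝ) 1, Q k x ∈ Set.Icc (0 : ℝ) 1) →
      (∀ k j, ∀ x ∈ Set.Icc (0 : Fin N → ℝ) 1,
        0 ≤ fderiv ℝ (Q k) x (Pi.single j 1)) →
      (∀ k j, j ≠ k → ∀ x ∈ Set.Icc (0 : Fin N → ℝ) 1,
        0 ≤ fderiv ℝ (fun y => fderiv ℝ (Q k) y (Pi.single j 1)) x (Pi.single k 1)) →
      ∀ i j, j ≠ i → ∀ x ∈ Set.Icc (0 : Fin N → ℝ) 1,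
        0 ≤ fderiv ℝ (fun y => fderiv ℝ (fun z => M i (fun k => Q k z)) y
              (Pi.single j 1)) x (Pi.single i 1)) :
    ∀ i k, ∀ q ∈ Set.Icc (0 : Fin N → ℝ) 1, 0 ≤ fderiv ℝ (M i) q (Pi.single k 1) := by
  intro i k q hq
  obtain ⟨j, hji⟩ : ∃ j : Fin N, j ≠ i :=
    Fintype.exists_ne_of_one_lt_card (by rw [Fintype.card_fin]; omega) i
  have he : ∀ a : Fin N, (0 : Fin N → ℝ) ≤ Pi.single a 1 := fun _ => Pi.single_nonneg.2 zero_le_one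
  have hMi : ∀ p ∈ Icc (0 : Fin N → ℝ) 1, ContDiffAt ℝ 2 (M i) p :=
    fun p hp => (hM2 i).contDiffAt (hV.mem_nhds (hVI hp))
  have hinterior : ∀ p ∈ Icc (0 : Fin N → ℝ) 1, p k < 1 →
      0 ≤ fderiv ℝ (M i) p (Pi.single k 1) := by
    intro p hp hpk
    have hε : 0 < 1 - p k := sub_pos.2 hpk
    have hbump : ∀ x ∈ Icc (0 : Fin N → ℝ) 1, crossBump p (1 - p k) i j k x ∈ Icc 0 1 :=
      fun x hx => crossBump_mem_Icc i j k hp hε.le (by linarith) hx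
    have hsc : 0 ≤ fderiv ℝ (fun y => fderiv ℝ (fun z => M i (crossBump p (1 - p k) i j k z)) y
        (Pi.single j 1)) 0 (Pi.single i 1) :=
      hSC (fun m x => crossBump p (1 - p k) i j k x m)
        (fun m => contDiff_pi.1 (contDiff_crossBump p _ i j k) m)
        (fun m x hx => ⟨(hbump x hx).1 m, (hbump x hx).2 m⟩)
        (fun m _ x hx => fderiv_crossBump_coord_nonneg i j k hε.le m hx.1 (he _))
        (fun m _ _ x _ => fderiv_fderiv_crossBump_coord_nonneg i j k hε.le m x (he _) (he _))
        i j hji 0 ⟨le_rfl, zero_le_one⟩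
    rwa [fderiv_fderiv_comp_crossBump i j k (hMi p hp) hji.symm,
      mul_nonneg_iff_of_pos_left hε] at hsc
  refine nonneg_of_continuousAt_of_forall_Ico_nonneg_smul
    (S := fun p => fderiv ℝ (M i) p (Pi.single k 1)) ?_ fun t ht => hinterior _ ?_ ?_
  · exact ((hMi q hq).fderiv_right (m := 1) le_rfl).continuousAt.clm_apply continuousAt_const
  · exact ⟨fun m => mul_nonneg ht.1 (hq.1 m), fun m => mul_le_one₀ ht.2.le (hq.1 m) (hq.2 m)⟩
  · exact (mul_le_of_le_one_right ht.1 (hq.2 k)).trans_lt ht.2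

/-- if a twice continuously differentiable mechanism `M` guarantees
strategic complementarities for every quality family satisfying positive spillovers
and effort complementarities, then each `M i` is monotone (nonnegative partial
derivatives) in every quality argument on `[0,1]^N`. -/
theorem strategic_complementarities_implies_monotone_mechanism
    (N : ℕ) (hN : 2 ≤ N)
    (M : Fin N → (Fin N → ℝ) → ℝ)
    (V : Set (Fin N → ℝ)) (hV : IsOpen V) (hVI : Set.Icc (0 : Fin N → ℝ) 1 ⊆ V)
    (hM2 : ∀ i, ContDiffOn ℝ 2 (M i) V)
    (hMrange : ∀ i, ∀ q ∈ Set.Icc (0 : Fin N → ℝ) 1, M i q ∈ Set.Icc (0 : ℝ) 1)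
    (hSC : ∀ Q : Fin N → (Fin N → ℝ) → ℝ,
      (∀ k, ContDiff ℝ 2 (Q k)) →
      (∀ k, ∀ x ∈ Set.Icc (0 : Fin N → ℝ) 1, Q k x ∈ Set.Icc (0 : ℝ) 1) →
      (∀ k j, ∀ x ∈ Set.Icc (0 : Fin N → ℝ) 1,
        0 ≤ fderiv ℝ (Q k) x (Pi.single j 1)) →
      (∀ k j, j ≠ k → ∀ x ∈ Set.Icc (0 : Fin N → ℝ) 1,
        0 ≤ fderiv ℝ (fun y => fderiv ℝ (Q k) y (Pi.single j 1)) x (Pi.single k 1)) →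
      ∀ i j, j ≠ i → ∀ x ∈ Set.Icc (0 : Fin N → ℝ) 1,
        0 ≤ fderiv ℝ (fun y => fderiv ℝ (fun z => M i (fun k => Q k z)) y
              (Pi.single j 1)) x (Pi.single i 1)) :
    ∀ i k, ∀ q ∈ Set.Icc (0 : Fin N → ℝ) 1, 0 ≤ fderiv ℝ (M i) q (Pi.single k 1) :=
  strategic_complementarities_implies_monotone_mechanism_general N hN M V hV hVI hM2 hSC
end

section
/- Let G = (V, E) be a finite simple undirected graph with V = {1,…,N}, N ≥ 1. Let p ∈ ℝ^N satisfy p_i ≥ 0 for all i and Σ_{i=1}^N p_i ≤ 1. Consider the binary game where each player chooses x_i ∈ {0,1} and receives utility U_i(x) = (x_i/N) · ( p_i·(1 + Σ_{j ≠ i, {i,j} ∈ E} x_j) − 1 ). Let x* ∈ {0,1}^N be a pure Nash equilibrium of this game and let N' = { i : x*_i = 1 }. If N' is nonempty, then: (a) p_i = 1/|N'| for every i ∈ N' and p_i = 0 for every i ∉ N'; and (b) N' is a clique of G, i.e. {i,j} ∈ E for every pair of distinct i, j ∈ N'. -/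
/-!
An equilibrium player `i` in the support `S` must not gain by leaving, which forces
`p i * (1 + dᵢ) ≥ 1`, where `dᵢ ≤ |S| - 1` is the number of neighbours of `i` in `S`.
Hence `p i ≥ 1 / |S|` on `S`, and since the shares sum to at most `1`, all these inequalities
are equalities: `p` is `1 / |S|` on `S`, vanishes off `S`, and `dᵢ = |S| - 1`, i.e. `i` is
adjacent to every other member of `S`.
-/

open Finset

namespace CliqueGame

variable {ι : Type*} [DecidableEq ι]

theorem sum_eq_card_filter_of_eq_zero_or_one {x : ι → ℝ} (hx01 : ∀ i, x i = 0 ∨ x i = 1)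
    {S : Finset ι} (hS : ∀ i, i ∈ S ↔ x i = 1) (s : Finset ι) :
    ∑ j ∈ s, x j = #(s.filter (· ∈ S)) := by
  rw [← sum_boole]
  refine sum_congr rfl fun j _ => ?_
  by_cases hj : j ∈ S
  · rw [if_pos hj, ← hS j]; exact hj
  · rw [if_neg hj]; exact (hx01 j).resolve_right (mt (hS j).mpr hj)

variable [Fintype ι]

theorem eq_on_and_eq_zero_off_of_le_of_sum_le {p : ι → ℝ} (hp : ∀ i, 0 ≤ p i)
    {S : Finset ι} {a : ℝ} (hle : ∀ i ∈ S, a ≤ p i) (hsum : ∑ i, p i ≤ #S * a) :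
    (∀ i ∈ S, p i = a) ∧ ∀ i ∉ S, p i = 0 := by
  have hS : ∑ i ∈ S, a ≤ ∑ i ∈ S, p i := sum_le_sum hle
  have hSc : 0 ≤ ∑ i ∈ Sᶜ, p i := sum_nonneg fun i _ => hp i
  have hsplit := sum_add_sum_compl S p
  rw [sum_const, nsmul_eq_mul] at hS
  refine ⟨fun i hi => ?_, fun i hi => ?_⟩
  · have hSeq : ∑ i ∈ S, a = ∑ i ∈ S, p i := by rw [sum_const, nsmul_eq_mul]; linarith
    exact ((sum_eq_sum_iff_of_le hle).mp hSeq i hi).symm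
  · have hSc0 : ∑ i ∈ Sᶜ, p i = 0 := by linarith
    exact (sum_eq_zero_iff_of_nonneg fun i _ => hp i).mp hSc0 i (mem_compl.mpr hi)

variable (G : SimpleGraph ι) [DecidableRel G.Adj]

theorem filter_ne_and_adj_eq_neighborFinset (i : ι) :
    univ.filter (fun j => j ≠ i ∧ G.Adj i j) = G.neighborFinset i := by
  ext j
  simp only [mem_filter, mem_univ, true_and, SimpleGraph.mem_neighborFinset,
    and_iff_right_iff_imp]
  exact fun h => h.ne'

theorem filter_mem_neighborFinset_subset_erase (S : Finset ι) (i : ι) :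
    (G.neighborFinset i).filter (· ∈ S) ⊆ S.erase i := fun j hj => by
  rw [mem_filter, SimpleGraph.mem_neighborFinset] at hj
  exact mem_erase.mpr ⟨hj.1.ne', hj.2⟩

theorem card_filter_mem_neighborFinset_add_one_le {S : Finset ι} {i : ι} (hi : i ∈ S) :
    #((G.neighborFinset i).filter (· ∈ S)) + 1 ≤ #S := by
  have := card_le_card (filter_mem_neighborFinset_subset_erase G S i)
  rw [card_erase_of_mem hi] at this
  have := card_pos.mpr ⟨i, hi⟩
  omega

theorem adj_of_card_le_card_filter_mem_neighborFinset_add_one {S : Finset ι} {i j : ι}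
    (hcard : #S ≤ #((G.neighborFinset i).filter (· ∈ S)) + 1) (hi : i ∈ S) (hj : j ∈ S)
    (hij : i ≠ j) : G.Adj i j := by
  have hsub := filter_mem_neighborFinset_subset_erase G S i
  have heq := eq_of_subset_of_card_le hsub (by rw [card_erase_of_mem hi]; omega)
  have hj' : j ∈ (G.neighborFinset i).filter (· ∈ S) := heq ▸ mem_erase.mpr ⟨hij.symm, hj⟩
  exact (G.mem_neighborFinset i j).mp (mem_filter.mp hj').1

end CliqueGame

open CliqueGame

theorem pne_support_is_clique_general
    (N : ℕ) (G : SimpleGraph (Fin N)) [DecidableRel G.Adj]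
    (p : Fin N → ℝ) (hp : ∀ i, 0 ≤ p i) (hpsum : ∑ i, p i ≤ 1)
    (U : Fin N → (Fin N → ℝ) → ℝ)
    (hU : ∀ i x, U i x = (x i / N) *
      (p i * (1 + ∑ j ∈ Finset.univ.filter (fun j => j ≠ i ∧ G.Adj i j), x j) - 1))
    (x : Fin N → ℝ) (hx01 : ∀ i, x i = 0 ∨ x i = 1)
    (hNE : ∀ i, U i (Function.update x i (1 - x i)) ≤ U i x)
    (S : Finset (Fin N)) (hS : ∀ i, i ∈ S ↔ x i = 1) (hSne : S.Nonempty) :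
    (∀ i ∈ S, p i = 1 / (S.card : ℝ)) ∧ (∀ i ∉ S, p i = 0) ∧
    (∀ i ∈ S, ∀ j ∈ S, i ≠ j → G.Adj i j) := by
  set d : Fin N → ℕ := fun i => #((G.neighborFinset i).filter (· ∈ S))
  have hcardS : (0 : ℝ) < #S := by exact_mod_cast hSne.card_pos
  have hstay : ∀ i ∈ S, 1 ≤ p i * (1 + d i) := by
    intro i hi
    have hxi := (hS i).mp hi
    have h := hNE i
    rw [hU, hU, hxi, sub_self, Function.update_self, zero_div, zero_mul,
      filter_ne_and_adj_eq_neighborFinset, sum_eq_card_filter_of_eq_zero_or_one hx01 hS] at h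
    have hNpos : (0 : ℝ) < N := by exact_mod_cast i.pos
    have := (mul_nonneg_iff_of_pos_left (one_div_pos.mpr hNpos)).mp h
    linarith
  have hlow : ∀ i ∈ S, 1 / (#S : ℝ) ≤ p i := by
    intro i hi
    have hd : (d i + 1 : ℝ) ≤ #S := by
      exact_mod_cast card_filter_mem_neighborFinset_add_one_le G hi
    rw [div_le_iff₀ hcardS]
    calc 1 ≤ p i * (1 + d i) := hstay i hi
      _ ≤ p i * #S := mul_le_mul_of_nonneg_left (by linarith) (hp i)
  obtain ⟨hshare, hzero⟩ := eq_on_and_eq_zero_off_of_le_of_sum_le hp hlow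
    (by rwa [mul_one_div_cancel hcardS.ne'])
  refine ⟨hshare, hzero, fun i hi j hj hij => ?_⟩
  refine adj_of_card_le_card_filter_mem_neighborFinset_add_one G ?_ hi hj hij
  have h := hstay i hi
  rw [hshare i hi, one_div_mul_eq_div, le_div_iff₀ hcardS, one_mul] at h
  exact_mod_cast (by linarith : (#S : ℝ) ≤ d i + 1)

/-- structure lemma for the Max-Clique reduction.  In the binary game
with utilities `U i x = (x i / N) * (p i * (1 + ∑_{j ≠ i, ij ∈ E} x j) - 1)` induced
by a feasible provisional allocation `p`, the support of any pure Nash equilibrium,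
if nonempty, receives equal shares `1/|S|` (zero outside) and forms a clique. -/
theorem pne_support_is_clique
    (N : ℕ) (hN : 1 ≤ N) (G : SimpleGraph (Fin N)) [DecidableRel G.Adj]
    (p : Fin N → ℝ) (hp : ∀ i, 0 ≤ p i) (hpsum : ∑ i, p i ≤ 1)
    (U : Fin N → (Fin N → ℝ) → ℝ)
    (hU : ∀ i x, U i x = (x i / N) *
      (p i * (1 + ∑ j ∈ Finset.univ.filter (fun j => j ≠ i ∧ G.Adj i j), x j) - 1))
    (x : Fin N → ℝ) (hx01 : ∀ i, x i = 0 ∨ x i = 1)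
    (hNE : ∀ i, U i (Function.update x i (1 - x i)) ≤ U i x)
    (S : Finset (Fin N)) (hS : ∀ i, i ∈ S ↔ x i = 1) (hSne : S.Nonempty) :
    (∀ i ∈ S, p i = 1 / (S.card : ℝ)) ∧ (∀ i ∉ S, p i = 0) ∧
    (∀ i ∈ S, ∀ j ∈ S, i ≠ j → G.Adj i j) :=
  pne_support_is_clique_general N G p hp hpsum U hU x hx01 hNE S hS hSne
end
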